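/- With the notation of the context, the identity a₁∘a₂ − a₂∘a₁ = τ∘(a₁ − a₂) holds in End_k(N(S)) for every finite set S if and only if both of the following hold: (a) for all finite sets S and all i,j,k,ℓ ∈ S with i ≠ ℓ, i ≠ k, j ≠ ℓ and j ≠ k: φ^{S∖ℓ}_{i,j} ∘ φ^{S∖j}_{ℓ,k} = φ^{S∖i}_{ℓ,k} ∘ φ^{S∖k}_{i,j} (i.e., the operations α and ω commute with themselves and each other); and (b) for all finite sets S and all distinct i,j,k ∈ S: α^{S∖i}_{j,k} ∘ α^{S∖k}_{i,j} = α^{S∖j}_{i,k}. (This characterizes when the data (α, ω) defines a representation of the curried general linear algebra on the standard FB-module.) -/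

import Mathlib

/-- An FB-module over `k`: a functor from the groupoid of finite sets (modelled as finite
subsets of `ℕ`) and bijections to `k`-modules.  A bijection `S → T` is encoded by a
function `f : ℕ → ℕ` that is injective on `S` with `S.image f = T`; the functor only
depends on the restriction of `f` to `S` (`map_congr`). -/
structure FBModule (k : Type) [CommRing k] where
  M : Finset ℕ → Type
  [acg : ∀ S, AddCommGroup (M S)]
  [mod : ∀ S, Module k (M S)]
  map : ∀ (f : ℕ → ℕ) (S T : Finset ℕ), Set.InjOn f S → S.image f = T → (M S →ₗ[k] M T)
  map_id : ∀ (S : Finset ℕ) (h1 : Set.InjOn (id : ℕ → ℕ) S) (h2 : S.image id = S),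
    map id S S h1 h2 = LinearMap.id
  map_comp : ∀ (f g : ℕ → ℕ) (S T U : Finset ℕ) (h1 : Set.InjOn f S) (h2 : S.image f = T)
    (h3 : Set.InjOn g T) (h4 : T.image g = U) (h5 : Set.InjOn (g ∘ f) S)
    (h6 : S.image (g ∘ f) = U),
    map g T U h3 h4 ∘ₗ map f S T h1 h2 = map (g ∘ f) S U h5 h6
  map_congr : ∀ (f g : ℕ → ℕ) (S T : Finset ℕ) (h : ∀ x ∈ S, f x = g x)
    (h1 : Set.InjOn f S) (h2 : S.image f = T) (h3 : Set.InjOn g S) (h4 : S.image g = T),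
    map f S T h1 h2 = map g S T h3 h4

attribute [instance] FBModule.acg FBModule.mod

variable {k : Type} [CommRing k]

/-- The canonical identification `M(s) ≅ M(t)` for equal finite sets `s = t` (the action
of the identity bijection). -/
def FBModule.cast (N : FBModule k) {s t : Finset ℕ} (h : s = t) : N.M s →ₗ[k] N.M t :=
  N.map id s t (Set.injOn_id _) (by rwa [Finset.image_id])


section Helpers

lemma sdiff_pair (S : Finset ℕ) (i j : ℕ) : S \ ({i, j} : Finset ℕ) = (S \ {i}) \ {j} := by
  ext x
  simp only [Finset.mem_sdiff, Finset.mem_insert, Finset.mem_singleton, not_or]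
  tauto

lemma sdiff_sdiff_comm' (S A B : Finset ℕ) : (S \ A) \ B = (S \ B) \ A := by
  ext x
  simp only [Finset.mem_sdiff]
  tauto

end Helpers

namespace Stmt15

variable {k : Type} [CommRing k] (N : FBModule k)

/-- The index set of `N(S) = ⊕_{(i,j) ∈ S × S, i ≠ j} M(S∖{i,j})`:
ordered pairs of distinct elements of `S`. -/
def ι (S : Finset ℕ) : Type := {p : ℕ × ℕ // p.1 ∈ S ∧ p.2 ∈ S ∧ p.1 ≠ p.2}

instance (S : Finset ℕ) : DecidableEq (ι S) := fun _ _ =>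
  decidable_of_iff _ Subtype.ext_iff.symm

/-- `N(S) = ⊕_{(i,j) ∈ S × S, i ≠ j} M(S∖{i,j})`, realizing `(V ⊗ V ⊗ M)(S)` for the
standard FB-module `V`. -/
def NS (S : Finset ℕ) : Type := DirectSum (ι S) (fun p => N.M (S \ {p.1.1, p.1.2}))

instance (S : Finset ℕ) : AddCommGroup (NS N S) := by unfold NS; infer_instance
instance (S : Finset ℕ) : Module k (NS N S) := by unfold NS; infer_instance

/-- `τ : N(S) → N(S)`, mapping the `(i,j)`-component identically onto the
`(j,i)`-component. -/
noncomputable def tauN (S : Finset ℕ) : NS N S →ₗ[k] NS N S :=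
  DirectSum.toModule k (ι S) (NS N S) (fun p =>
    (DirectSum.lof k (ι S) (fun q => N.M (S \ {q.1.1, q.1.2}))
        ⟨(p.1.2, p.1.1), ⟨p.2.2.1, p.2.1, p.2.2.2.symm⟩⟩) ∘ₗ
      N.cast (by rw [Finset.pair_comm]))

variable (φ : ∀ (T : Finset ℕ) (u v : ℕ), u ∈ T → v ∈ T → (N.M (T \ {v}) →ₗ[k] N.M (T \ {u})))

/-- `a₂ : N(S) → N(S)`, mapping the `(i,j)`-component to the `(i,j′)`-component (for
each `j′ ∈ S∖{i}`) by `φ^{S∖i}_{j′,j}`. -/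
noncomputable def a2N (S : Finset ℕ) : NS N S →ₗ[k] NS N S :=
  DirectSum.toModule k (ι S) (NS N S) (fun p =>
    ∑ j' ∈ (S \ {p.1.1}).attach,
      (DirectSum.lof k (ι S) (fun q => N.M (S \ {q.1.1, q.1.2}))
          ⟨(p.1.1, j'.1),
            ⟨p.2.1, (Finset.mem_sdiff.mp j'.2).1,
              fun h => (Finset.mem_sdiff.mp j'.2).2 (Finset.mem_singleton.mpr (Eq.symm h))⟩⟩) ∘ₗ
        N.cast (sdiff_pair S p.1.1 j'.1).symm ∘ₗ
        φ (S \ {p.1.1}) j'.1 p.1.2 j'.2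
          (Finset.mem_sdiff.mpr ⟨p.2.2.1, by simp [p.2.2.2.symm]⟩) ∘ₗ
        N.cast (sdiff_pair S p.1.1 p.1.2))

/-- `a₁ = τ ∘ a₂ ∘ τ`. -/
noncomputable def a1N (S : Finset ℕ) : NS N S →ₗ[k] NS N S :=
  tauN N S ∘ₗ a2N N φ S ∘ₗ tauN N S

end Stmt15

namespace Stmt15

variable {k : Type} [CommRing k] (N : FBModule k)

/-- Condition (a): the operations `α` and `ω` commute with themselves and each other;
uniformly in terms of `φ`: for `i, j, k, ℓ ∈ S` with `i ≠ ℓ`, `i ≠ k`, `j ≠ ℓ`, `j ≠ k`,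
`φ^{S∖ℓ}_{i,j} ∘ φ^{S∖j}_{ℓ,k} = φ^{S∖i}_{ℓ,k} ∘ φ^{S∖k}_{i,j}`. -/
def CondA (φ : ∀ (T : Finset ℕ) (u v : ℕ), u ∈ T → v ∈ T →
    (N.M (T \ {v}) →ₗ[k] N.M (T \ {u}))) : Prop :=
  ∀ (S : Finset ℕ) (i j kk l : ℕ) (hi : i ∈ S) (hj : j ∈ S) (hk : kk ∈ S) (hl : l ∈ S)
    (hil : i ≠ l) (hik : i ≠ kk) (hjl : j ≠ l) (hjk : j ≠ kk),
    φ (S \ {l}) i j (Finset.mem_sdiff.mpr ⟨hi, by simp [hil]⟩)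
        (Finset.mem_sdiff.mpr ⟨hj, by simp [hjl]⟩) ∘ₗ
      N.cast (sdiff_sdiff_comm' S {j} {l}) ∘ₗ
      φ (S \ {j}) l kk (Finset.mem_sdiff.mpr ⟨hl, by simp [hjl.symm]⟩)
        (Finset.mem_sdiff.mpr ⟨hk, by simp [hjk.symm]⟩) =
    N.cast (sdiff_sdiff_comm' S {i} {l}) ∘ₗ
      φ (S \ {i}) l kk (Finset.mem_sdiff.mpr ⟨hl, by simp [hil.symm]⟩)
        (Finset.mem_sdiff.mpr ⟨hk, by simp [hik.symm]⟩) ∘ₗ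
      N.cast (sdiff_sdiff_comm' S {kk} {i}) ∘ₗ
      φ (S \ {kk}) i j (Finset.mem_sdiff.mpr ⟨hi, by simp [hik]⟩)
        (Finset.mem_sdiff.mpr ⟨hj, by simp [hjk]⟩) ∘ₗ
      N.cast (sdiff_sdiff_comm' S {j} {kk})

/-- Condition (b): for distinct `i, j, k ∈ S`,
`α^{S∖i}_{j,k} ∘ α^{S∖k}_{i,j} = α^{S∖j}_{i,k}`. -/
def CondB (α : ∀ (T : Finset ℕ) (u v : ℕ), u ∈ T → v ∈ T → u ≠ v →
    (N.M (T \ {v}) →ₗ[k] N.M (T \ {u}))) : Prop :=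
  ∀ (S : Finset ℕ) (i j kk : ℕ) (hi : i ∈ S) (hj : j ∈ S) (hk : kk ∈ S)
    (hij : i ≠ j) (hik : i ≠ kk) (hjk : j ≠ kk),
    α (S \ {i}) j kk (Finset.mem_sdiff.mpr ⟨hj, by simp [hij.symm]⟩)
        (Finset.mem_sdiff.mpr ⟨hk, by simp [hik.symm]⟩) hjk ∘ₗ
      N.cast (sdiff_sdiff_comm' S {kk} {i}) ∘ₗ
      α (S \ {kk}) i j (Finset.mem_sdiff.mpr ⟨hi, by simp [hik]⟩)
        (Finset.mem_sdiff.mpr ⟨hj, by simp [hjk]⟩) hij =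
    N.cast (sdiff_sdiff_comm' S {j} {i}) ∘ₗ
      α (S \ {j}) i kk (Finset.mem_sdiff.mpr ⟨hi, by simp [hij]⟩)
        (Finset.mem_sdiff.mpr ⟨hk, by simp [hjk.symm]⟩) hik ∘ₗ
      N.cast (sdiff_sdiff_comm' S {kk} {j})

/-!
Both sides of `a₁a₂ − a₂a₁ = τ(a₁ − a₂)` are compared entry by entry on the summands of `N(S)`.
For `p = (i, j)` and `q = (a, b)`, the `(q, p)`-entry of `a₁a₂` is `φ^{S∖b}_{a,i} φ^{S∖i}_{b,j}`
and that of `a₂a₁` is `φ^{S∖a}_{b,j} φ^{S∖j}_{a,i}`, present only when `b ≠ i`, resp. `a ≠ j`;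
`τa₁` and `τa₂` contribute only when `a = j`, resp. `b = i`, by `φ^{S∖j}_{b,i}`, resp.
`φ^{S∖i}_{a,j}`. So for `b ≠ i`, `a ≠ j` the entry identity is an instance of (a), when exactly
one of `b = i`, `a = j` holds it is an instance of (b), and for `q = (j, i)` it reads `ω = ω`.
Every instance of (a) and (b) arises this way.
-/

end Stmt15

namespace FBModule

variable (N : FBModule k)

@[simp] lemma cast_rfl {s : Finset ℕ} (h : s = s) (x : N.M s) : N.cast h x = x := by
  simp only [FBModule.cast, N.map_id]
  rfl

@[simp] lemma cast_cast {s t u : Finset ℕ} (h₁ : s = t) (h₂ : t = u) (x : N.M s) :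
    N.cast h₂ (N.cast h₁ x) = N.cast (h₁.trans h₂) x := by
  subst h₁ h₂
  simp

lemma cast_apply_comm (f : ∀ T, N.M T →ₗ[k] N.M T) {s t : Finset ℕ} (h : s = t)
    (x : N.M s) : N.cast h (f s x) = f t (N.cast h x) := by
  subst h
  simp

end FBModule

namespace Stmt15

lemma sdiff_pair_swap (S : Finset ℕ) (i j : ℕ) :
    S \ ({i, j} : Finset ℕ) = (S \ {j}) \ {i} := by
  rw [Finset.pair_comm, sdiff_pair]

lemma mem_sdiff_singleton_of_ne {S : Finset ℕ} {x y : ℕ} (hx : x ∈ S) (hxy : x ≠ y) :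
    x ∈ S \ {y} :=
  Finset.mem_sdiff.mpr ⟨hx, by simp [hxy]⟩

abbrev ι.swap {S : Finset ℕ} (q : ι S) : ι S :=
  ⟨(q.1.2, q.1.1), q.2.2.1, q.2.1, q.2.2.2.symm⟩

lemma sdiff_swap {S : Finset ℕ} (q : ι S) :
    S \ {q.swap.1.1, q.swap.1.2} = S \ {q.1.1, q.1.2} :=
  congrArg (S \ ·) (Finset.pair_comm _ _)

variable (N : FBModule k)

abbrev lofN (S : Finset ℕ) (q : ι S) : N.M (S \ {q.1.1, q.1.2}) →ₗ[k] NS N S :=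
  DirectSum.lof k (ι S) (fun q => N.M (S \ {q.1.1, q.1.2})) q

abbrev componentN (S : Finset ℕ) (q : ι S) : NS N S →ₗ[k] N.M (S \ {q.1.1, q.1.2}) :=
  DirectSum.component k (ι S) (fun q => N.M (S \ {q.1.1, q.1.2})) q

section Entries

variable {N}

lemma componentN_lofN_self {S : Finset ℕ} (p : ι S) (x : N.M (S \ {p.1.1, p.1.2})) :
    componentN N S p (lofN N S p x) = x := by
  erw [DirectSum.component.of, dif_pos rfl]

lemma componentN_lofN_of_ne {S : Finset ℕ} {p q : ι S} (h : p ≠ q)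
    (x : N.M (S \ {p.1.1, p.1.2})) : componentN N S q (lofN N S p x) = 0 := by
  erw [DirectSum.component.of, dif_neg h]

lemma tauN_lofN {S : Finset ℕ} (p : ι S) (x : N.M (S \ {p.1.1, p.1.2})) :
    tauN N S (lofN N S p x) =
      lofN N S p.swap (N.cast (sdiff_swap p).symm x) := by
  unfold tauN
  erw [DirectSum.toModule_lof]
  rfl

lemma componentN_tauN {S : Finset ℕ} (q : ι S) (y : NS N S) :
    componentN N S q (tauN N S y) = N.cast (sdiff_swap q) (componentN N S q.swap y) := by
  suffices componentN N S q ∘ₗ tauN N S = N.cast (sdiff_swap q) ∘ₗ componentN N S q.swap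
    from LinearMap.congr_fun this y
  refine DirectSum.linearMap_ext k fun p => LinearMap.ext fun x => ?_
  change componentN N S q (tauN N S (lofN N S p x)) = N.cast _ (componentN N S _ (lofN N S p x))
  rw [tauN_lofN]
  by_cases hpq : p = q.swap
  · subst hpq
    erw [componentN_lofN_self, componentN_lofN_self]
  · erw [componentN_lofN_of_ne, componentN_lofN_of_ne hpq, map_zero]
    rintro rfl
    exact hpq rfl

variable (φ : ∀ (T : Finset ℕ) (u v : ℕ), u ∈ T → v ∈ T →
  (N.M (T \ {v}) →ₗ[k] N.M (T \ {u})))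

lemma a2N_lofN {S : Finset ℕ} (p : ι S) (x : N.M (S \ {p.1.1, p.1.2})) :
    a2N N φ S (lofN N S p x) =
      ∑ j ∈ (S \ {p.1.1}).attach,
        lofN N S ⟨(p.1.1, j.1), p.2.1, (Finset.mem_sdiff.mp j.2).1,
            fun h => (Finset.mem_sdiff.mp j.2).2 (Finset.mem_singleton.mpr h.symm)⟩
          (N.cast (sdiff_pair S p.1.1 j.1).symm
            (φ (S \ {p.1.1}) j.1 p.1.2 j.2 (mem_sdiff_singleton_of_ne p.2.2.1 p.2.2.2.symm)
              (N.cast (sdiff_pair S p.1.1 p.1.2) x))) := by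
  unfold a2N
  erw [DirectSum.toModule_lof, LinearMap.sum_apply]
  rfl

lemma a1N_lofN {S : Finset ℕ} (p : ι S) (x : N.M (S \ {p.1.1, p.1.2})) :
    a1N N φ S (lofN N S p x) =
      ∑ i ∈ (S \ {p.1.2}).attach,
        lofN N S ⟨(i.1, p.1.2), (Finset.mem_sdiff.mp i.2).1, p.2.2.1,
            fun h => (Finset.mem_sdiff.mp i.2).2 (Finset.mem_singleton.mpr h)⟩
          (N.cast (sdiff_pair_swap S i.1 p.1.2).symm
            (φ (S \ {p.1.2}) i.1 p.1.1 i.2 (mem_sdiff_singleton_of_ne p.2.1 p.2.2.2)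
              (N.cast (sdiff_pair_swap S p.1.1 p.1.2) x))) := by
  simp only [a1N, LinearMap.comp_apply, tauN_lofN, a2N_lofN φ p.swap, map_sum]
  refine Finset.sum_congr rfl fun i _ => ?_
  erw [tauN_lofN]
  congr 1
  simp

lemma componentN_a2N_of_fst_ne {S : Finset ℕ} {p q : ι S} (h : q.1.1 ≠ p.1.1)
    (x : N.M (S \ {p.1.1, p.1.2})) : componentN N S q (a2N N φ S (lofN N S p x)) = 0 := by
  rw [a2N_lofN, map_sum]
  refine Finset.sum_eq_zero fun j _ => componentN_lofN_of_ne (fun hc => h ?_) _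
  exact (congrArg (fun r : ι S => r.1.1) hc).symm

lemma componentN_a1N_of_snd_ne {S : Finset ℕ} {p q : ι S} (h : q.1.2 ≠ p.1.2)
    (x : N.M (S \ {p.1.1, p.1.2})) : componentN N S q (a1N N φ S (lofN N S p x)) = 0 := by
  rw [a1N_lofN, map_sum]
  refine Finset.sum_eq_zero fun i _ => componentN_lofN_of_ne (fun hc => h ?_) _
  exact (congrArg (fun r : ι S => r.1.2) hc).symm

lemma componentN_a2N {S : Finset ℕ} (p : ι S) {b : ℕ} (hb : b ∈ S) (hib : p.1.1 ≠ b)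
    (x : N.M (S \ {p.1.1, p.1.2})) :
    componentN N S ⟨(p.1.1, b), p.2.1, hb, hib⟩ (a2N N φ S (lofN N S p x)) =
      N.cast (sdiff_pair S p.1.1 b).symm
        (φ (S \ {p.1.1}) b p.1.2 (mem_sdiff_singleton_of_ne hb hib.symm)
          (mem_sdiff_singleton_of_ne p.2.2.1 p.2.2.2.symm)
          (N.cast (sdiff_pair S p.1.1 p.1.2) x)) := by
  rw [a2N_lofN, map_sum, Finset.sum_eq_single_of_mem
    ⟨b, mem_sdiff_singleton_of_ne hb hib.symm⟩ (Finset.mem_attach _ _)]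
  · exact componentN_lofN_self _ _
  · exact fun j _ hj => componentN_lofN_of_ne
      (fun hc => hj (Subtype.ext (congrArg (fun r : ι S => r.1.2) hc))) _

lemma componentN_a1N {S : Finset ℕ} (p : ι S) {a : ℕ} (ha : a ∈ S) (haj : a ≠ p.1.2)
    (x : N.M (S \ {p.1.1, p.1.2})) :
    componentN N S ⟨(a, p.1.2), ha, p.2.2.1, haj⟩ (a1N N φ S (lofN N S p x)) =
      N.cast (sdiff_pair_swap S a p.1.2).symm
        (φ (S \ {p.1.2}) a p.1.1 (mem_sdiff_singleton_of_ne ha haj)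
          (mem_sdiff_singleton_of_ne p.2.1 p.2.2.2)
          (N.cast (sdiff_pair_swap S p.1.1 p.1.2) x)) := by
  rw [a1N_lofN, map_sum,
    Finset.sum_eq_single_of_mem ⟨a, mem_sdiff_singleton_of_ne ha haj⟩ (Finset.mem_attach _ _)]
  · exact componentN_lofN_self _ _
  · exact fun i _ hi => componentN_lofN_of_ne
      (fun hc => hi (Subtype.ext (congrArg (fun r : ι S => r.1.1) hc))) _

lemma componentN_a1N_a2N_of_snd_eq {S : Finset ℕ} {p q : ι S} (h : q.1.2 = p.1.1)
    (x : N.M (S \ {p.1.1, p.1.2})) :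
    componentN N S q (a1N N φ S (a2N N φ S (lofN N S p x))) = 0 := by
  rw [a2N_lofN, map_sum, map_sum]
  refine Finset.sum_eq_zero fun j _ => componentN_a1N_of_snd_ne φ ?_ _
  change q.1.2 ≠ j.1
  rw [h]
  exact fun hj => (Finset.mem_sdiff.mp j.2).2 (Finset.mem_singleton.mpr hj.symm)

lemma componentN_a2N_a1N_of_fst_eq {S : Finset ℕ} {p q : ι S} (h : q.1.1 = p.1.2)
    (x : N.M (S \ {p.1.1, p.1.2})) :
    componentN N S q (a2N N φ S (a1N N φ S (lofN N S p x))) = 0 := by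
  rw [a1N_lofN, map_sum, map_sum]
  refine Finset.sum_eq_zero fun i _ => componentN_a2N_of_fst_ne φ ?_ _
  change q.1.1 ≠ i.1
  rw [h]
  exact fun hi => (Finset.mem_sdiff.mp i.2).2 (Finset.mem_singleton.mpr hi.symm)

lemma componentN_a1N_a2N {S : Finset ℕ} (p : ι S) {a b : ℕ} (ha : a ∈ S) (hb : b ∈ S)
    (hab : a ≠ b) (hbi : b ≠ p.1.1) (x : N.M (S \ {p.1.1, p.1.2})) :
    componentN N S ⟨(a, b), ha, hb, hab⟩ (a1N N φ S (a2N N φ S (lofN N S p x))) =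
      N.cast (sdiff_pair_swap S a b).symm
        (φ (S \ {b}) a p.1.1 (mem_sdiff_singleton_of_ne ha hab)
          (mem_sdiff_singleton_of_ne p.2.1 hbi.symm)
          (N.cast (sdiff_sdiff_comm' S {p.1.1} {b})
            (φ (S \ {p.1.1}) b p.1.2 (mem_sdiff_singleton_of_ne hb hbi)
              (mem_sdiff_singleton_of_ne p.2.2.1 p.2.2.2.symm)
              (N.cast (sdiff_pair S p.1.1 p.1.2) x)))) := by
  rw [a2N_lofN, map_sum, map_sum,
    Finset.sum_eq_single_of_mem ⟨b, mem_sdiff_singleton_of_ne hb hbi⟩ (Finset.mem_attach _ _)]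
  · erw [componentN_a1N φ ⟨(p.1.1, b), p.2.1, hb, hbi.symm⟩ ha hab]
    simp
  · exact fun j _ hj => componentN_a1N_of_snd_ne φ (fun hc => hj (Subtype.ext hc.symm)) _

lemma componentN_a2N_a1N {S : Finset ℕ} (p : ι S) {a b : ℕ} (ha : a ∈ S) (hb : b ∈ S)
    (hab : a ≠ b) (haj : a ≠ p.1.2) (x : N.M (S \ {p.1.1, p.1.2})) :
    componentN N S ⟨(a, b), ha, hb, hab⟩ (a2N N φ S (a1N N φ S (lofN N S p x))) =
      N.cast (sdiff_pair S a b).symm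
        (φ (S \ {a}) b p.1.2 (mem_sdiff_singleton_of_ne hb hab.symm)
          (mem_sdiff_singleton_of_ne p.2.2.1 haj.symm)
          (N.cast (sdiff_sdiff_comm' S {p.1.2} {a})
            (φ (S \ {p.1.2}) a p.1.1 (mem_sdiff_singleton_of_ne ha haj)
              (mem_sdiff_singleton_of_ne p.2.1 p.2.2.2)
              (N.cast (sdiff_pair_swap S p.1.1 p.1.2) x)))) := by
  rw [a1N_lofN, map_sum, map_sum,
    Finset.sum_eq_single_of_mem ⟨a, mem_sdiff_singleton_of_ne ha haj⟩ (Finset.mem_attach _ _)]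
  · erw [componentN_a2N φ ⟨(a, p.1.2), ha, p.2.2.1, haj⟩ hb hab]
    simp
  · exact fun i _ hi => componentN_a2N_of_fst_ne φ (fun hc => hi (Subtype.ext hc.symm)) _

lemma componentN_tauN_a1N_of_fst_ne {S : Finset ℕ} {p q : ι S} (h : q.1.1 ≠ p.1.2)
    (x : N.M (S \ {p.1.1, p.1.2})) :
    componentN N S q (tauN N S (a1N N φ S (lofN N S p x))) = 0 := by
  rw [componentN_tauN, componentN_a1N_of_snd_ne φ (q := q.swap) h, map_zero]

lemma componentN_tauN_a2N_of_snd_ne {S : Finset ℕ} {p q : ι S} (h : q.1.2 ≠ p.1.1)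
    (x : N.M (S \ {p.1.1, p.1.2})) :
    componentN N S q (tauN N S (a2N N φ S (lofN N S p x))) = 0 := by
  rw [componentN_tauN, componentN_a2N_of_fst_ne φ (q := q.swap) h, map_zero]

lemma componentN_tauN_a1N {S : Finset ℕ} (p : ι S) {b : ℕ} (hb : b ∈ S) (hjb : p.1.2 ≠ b)
    (x : N.M (S \ {p.1.1, p.1.2})) :
    componentN N S ⟨(p.1.2, b), p.2.2.1, hb, hjb⟩ (tauN N S (a1N N φ S (lofN N S p x))) =
      N.cast (sdiff_pair S p.1.2 b).symm
        (φ (S \ {p.1.2}) b p.1.1 (mem_sdiff_singleton_of_ne hb hjb.symm)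
          (mem_sdiff_singleton_of_ne p.2.1 p.2.2.2)
          (N.cast (sdiff_pair_swap S p.1.1 p.1.2) x)) := by
  erw [componentN_tauN, componentN_a1N φ p hb hjb.symm]
  simp

lemma componentN_tauN_a2N {S : Finset ℕ} (p : ι S) {a : ℕ} (ha : a ∈ S) (hai : a ≠ p.1.1)
    (x : N.M (S \ {p.1.1, p.1.2})) :
    componentN N S ⟨(a, p.1.1), ha, p.2.1, hai⟩ (tauN N S (a2N N φ S (lofN N S p x))) =
      N.cast (sdiff_pair_swap S a p.1.1).symm
        (φ (S \ {p.1.1}) a p.1.2 (mem_sdiff_singleton_of_ne ha hai)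
          (mem_sdiff_singleton_of_ne p.2.2.1 p.2.2.2.symm)
          (N.cast (sdiff_pair S p.1.1 p.1.2) x)) := by
  erw [componentN_tauN, componentN_a2N φ p ha hai.symm]
  simp

def GlEntry (S : Finset ℕ) (p q : ι S) (x : N.M (S \ {p.1.1, p.1.2})) : Prop :=
  componentN N S q (a1N N φ S (a2N N φ S (lofN N S p x))) -
      componentN N S q (a2N N φ S (a1N N φ S (lofN N S p x))) =
    componentN N S q (tauN N S (a1N N φ S (lofN N S p x))) -
      componentN N S q (tauN N S (a2N N φ S (lofN N S p x)))

lemma glIdentity_iff_forall_glEntry (S : Finset ℕ) :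
    a1N N φ S ∘ₗ a2N N φ S - a2N N φ S ∘ₗ a1N N φ S =
        tauN N S ∘ₗ (a1N N φ S - a2N N φ S) ↔ ∀ p q x, GlEntry φ S p q x := by
  constructor
  · intro H p q x
    have := congrArg (componentN N S q) (LinearMap.congr_fun H (lofN N S p x))
    simpa only [GlEntry, LinearMap.sub_apply, LinearMap.comp_apply, map_sub] using this
  · intro H
    refine DirectSum.linearMap_ext k fun p => LinearMap.ext fun x =>
      DirectSum.ext_component k fun q => ?_
    change componentN N S q
        ((a1N N φ S ∘ₗ a2N N φ S - a2N N φ S ∘ₗ a1N N φ S) (lofN N S p x)) =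
      componentN N S q ((tauN N S ∘ₗ (a1N N φ S - a2N N φ S)) (lofN N S p x))
    simpa only [GlEntry, LinearMap.sub_apply, LinearMap.comp_apply, map_sub] using H p q x

lemma condA_of_forall_glEntry (H : ∀ S p q x, GlEntry φ S p q x) : CondA N φ := by
  intro S i j kk l hi hj hk hl hil hik hjl hjk
  refine LinearMap.ext fun y => ?_
  have h := H S ⟨(j, kk), hj, hk, hjk⟩ ⟨(i, l), hi, hl, hil⟩
    (N.cast (sdiff_pair S j kk).symm y)
  unfold GlEntry at h
  erw [componentN_a1N_a2N φ _ hi hl hil hjl.symm, componentN_a2N_a1N φ _ hi hl hil hik,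
    componentN_tauN_a1N_of_fst_ne φ hik, componentN_tauN_a2N_of_snd_ne φ hjl.symm, sub_zero,
    sub_eq_zero] at h
  have h' := congrArg (N.cast (sdiff_pair_swap S i l)) h
  simpa only [FBModule.cast_cast, FBModule.cast_rfl, LinearMap.comp_apply] using h'

lemma glEntry_swap (ω : ∀ T : Finset ℕ, N.M T →ₗ[k] N.M T)
    (hφω : ∀ (T : Finset ℕ) (u : ℕ) (hu hu' : u ∈ T), φ T u u hu hu' = ω (T \ {u}))
    {S : Finset ℕ} (p : ι S) (x : N.M (S \ {p.1.1, p.1.2})) :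
    GlEntry φ S p p.swap x := by
  unfold GlEntry
  erw [componentN_a1N_a2N_of_snd_eq φ rfl, componentN_a2N_a1N_of_fst_eq φ rfl,
    componentN_tauN_a1N φ p p.2.1 p.2.2.2.symm, componentN_tauN_a2N φ p p.2.2.1 p.2.2.2.symm,
    hφω, hφω, N.cast_apply_comm ω, N.cast_apply_comm ω]
  simp only [FBModule.cast_cast, sub_self]

lemma glEntry_of_condA (hA : CondA N φ) {S : Finset ℕ} (p : ι S) {a b : ℕ} (ha : a ∈ S)
    (hb : b ∈ S) (hab : a ≠ b) (hbi : b ≠ p.1.1) (haj : a ≠ p.1.2)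
    (x : N.M (S \ {p.1.1, p.1.2})) : GlEntry φ S p ⟨(a, b), ha, hb, hab⟩ x := by
  unfold GlEntry
  erw [componentN_a1N_a2N φ p ha hb hab hbi, componentN_a2N_a1N φ p ha hb hab haj,
    componentN_tauN_a1N_of_fst_ne φ haj, componentN_tauN_a2N_of_snd_ne φ hbi, sub_zero,
    sub_eq_zero]
  have h := LinearMap.congr_fun
    (hA S a p.1.1 p.1.2 b ha p.2.1 p.2.2.1 hb hab haj hbi.symm p.2.2.2)
    (N.cast (sdiff_pair S p.1.1 p.1.2) x)
  simp only [LinearMap.comp_apply] at h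
  rw [h]
  simp only [FBModule.cast_cast]

section OffDiagonal

variable {α : ∀ (T : Finset ℕ) (u v : ℕ), u ∈ T → v ∈ T → u ≠ v →
  (N.M (T \ {v}) →ₗ[k] N.M (T \ {u}))}

lemma condB_of_forall_glEntry
    (hφα : ∀ (T : Finset ℕ) (u v : ℕ) (hu : u ∈ T) (hv : v ∈ T) (huv : u ≠ v),
      φ T u v hu hv = α T u v hu hv huv)
    (H : ∀ S p q x, GlEntry φ S p q x) : CondB N α := by
  intro S i j kk hi hj hk hij hik hjk
  refine LinearMap.ext fun y => ?_
  have h := H S ⟨(kk, j), hk, hj, hjk.symm⟩ ⟨(j, i), hj, hi, hij.symm⟩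
    (N.cast (sdiff_pair S kk j).symm y)
  unfold GlEntry at h
  erw [componentN_a1N_a2N φ _ hj hi hij.symm hik, componentN_a2N_a1N_of_fst_eq φ rfl,
    componentN_tauN_a1N φ _ hi hij.symm, componentN_tauN_a2N_of_snd_ne φ hik, sub_zero,
    sub_zero, hφα (S \ {i}) j kk _ _ hjk, hφα (S \ {kk}) i j _ _ hij,
    hφα (S \ {j}) i kk _ _ hik] at h
  have h' := congrArg (N.cast (sdiff_pair_swap S j i)) h
  simpa only [FBModule.cast_cast, FBModule.cast_rfl, LinearMap.comp_apply] using h'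

lemma glEntry_of_condB_of_snd_eq
    (hφα : ∀ (T : Finset ℕ) (u v : ℕ) (hu : u ∈ T) (hv : v ∈ T) (huv : u ≠ v),
      φ T u v hu hv = α T u v hu hv huv)
    (hB : CondB N α) {S : Finset ℕ} (p : ι S) {a : ℕ}
    (ha : a ∈ S) (hai : a ≠ p.1.1) (haj : a ≠ p.1.2) (x : N.M (S \ {p.1.1, p.1.2})) :
    GlEntry φ S p ⟨(a, p.1.1), ha, p.2.1, hai⟩ x := by
  unfold GlEntry
  erw [componentN_a1N_a2N_of_snd_eq φ rfl, componentN_a2N_a1N φ p ha p.2.1 hai haj,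
    componentN_tauN_a1N_of_fst_ne φ haj, componentN_tauN_a2N φ p ha hai,
    hφα (S \ {a}) p.1.1 p.1.2 _ _ p.2.2.2, hφα (S \ {p.1.2}) a p.1.1 _ _ hai,
    hφα (S \ {p.1.1}) a p.1.2 _ _ haj]
  have h := LinearMap.congr_fun (hB S a p.1.1 p.1.2 ha p.2.1 p.2.2.1 hai haj p.2.2.2)
    (N.cast (sdiff_pair_swap S p.1.1 p.1.2) x)
  simp only [LinearMap.comp_apply] at h
  rw [h]
  simp only [FBModule.cast_cast]

lemma glEntry_of_condB_of_fst_eq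
    (hφα : ∀ (T : Finset ℕ) (u v : ℕ) (hu : u ∈ T) (hv : v ∈ T) (huv : u ≠ v),
      φ T u v hu hv = α T u v hu hv huv)
    (hB : CondB N α) {S : Finset ℕ} (p : ι S) {b : ℕ}
    (hb : b ∈ S) (hjb : p.1.2 ≠ b) (hbi : b ≠ p.1.1) (x : N.M (S \ {p.1.1, p.1.2})) :
    GlEntry φ S p ⟨(p.1.2, b), p.2.2.1, hb, hjb⟩ x := by
  unfold GlEntry
  erw [componentN_a1N_a2N φ p p.2.2.1 hb hjb hbi, componentN_a2N_a1N_of_fst_eq φ rfl,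
    componentN_tauN_a1N φ p hb hjb, componentN_tauN_a2N_of_snd_ne φ hbi,
    hφα (S \ {b}) p.1.2 p.1.1 _ _ p.2.2.2.symm, hφα (S \ {p.1.1}) b p.1.2 _ _ hjb.symm,
    hφα (S \ {p.1.2}) b p.1.1 _ _ hbi]
  have h := LinearMap.congr_fun
    (hB S b p.1.2 p.1.1 hb p.2.2.1 p.2.1 hjb.symm hbi p.2.2.2.symm)
    (N.cast (sdiff_pair S p.1.1 p.1.2) x)
  simp only [LinearMap.comp_apply] at h
  rw [h]
  simp only [FBModule.cast_cast]

lemma forall_glEntry_of_condA_of_condB (ω : ∀ T : Finset ℕ, N.M T →ₗ[k] N.M T)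
    (hφω : ∀ (T : Finset ℕ) (u : ℕ) (hu hu' : u ∈ T), φ T u u hu hu' = ω (T \ {u}))
    (hφα : ∀ (T : Finset ℕ) (u v : ℕ) (hu : u ∈ T) (hv : v ∈ T) (huv : u ≠ v),
      φ T u v hu hv = α T u v hu hv huv)
    (hA : CondA N φ) (hB : CondB N α) (S : Finset ℕ) (p q : ι S)
    (x : N.M (S \ {p.1.1, p.1.2})) : GlEntry φ S p q x := by
  obtain ⟨⟨a, b⟩, ha, hb, hab⟩ := q
  by_cases hbi : b = p.1.1 <;> by_cases haj : a = p.1.2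
  · subst hbi haj
    exact glEntry_swap φ ω hφω p x
  · subst hbi
    exact glEntry_of_condB_of_snd_eq φ hφα hB p ha hab haj x
  · subst haj
    exact glEntry_of_condB_of_fst_eq φ hφα hB p hb hab hbi x
  · exact glEntry_of_condA φ hA p ha hb hab hbi haj x

end OffDiagonal

end Entries

theorem statement15
    (ω : ∀ T : Finset ℕ, N.M T →ₗ[k] N.M T)
    (α : ∀ (T : Finset ℕ) (u v : ℕ), u ∈ T → v ∈ T → u ≠ v →
      (N.M (T \ {v}) →ₗ[k] N.M (T \ {u})))
    (φ : ∀ (T : Finset ℕ) (u v : ℕ), u ∈ T → v ∈ T →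
      (N.M (T \ {v}) →ₗ[k] N.M (T \ {u})))
    (hφoff : ∀ (T : Finset ℕ) (u v : ℕ) (hu : u ∈ T) (hv : v ∈ T) (huv : u ≠ v),
      φ T u v hu hv = α T u v hu hv huv)
    (hφdiag : ∀ (T : Finset ℕ) (u : ℕ) (hu hu' : u ∈ T),
      φ T u u hu hu' = ω (T \ {u})) :
    (∀ S : Finset ℕ,
      a1N N φ S ∘ₗ a2N N φ S - a2N N φ S ∘ₗ a1N N φ S =
        tauN N S ∘ₗ (a1N N φ S - a2N N φ S)) ↔
    (CondA N φ ∧ CondB N α) := by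
  simp only [glIdentity_iff_forall_glEntry]
  exact ⟨fun H => ⟨condA_of_forall_glEntry φ H, condB_of_forall_glEntry φ hφoff H⟩,
    fun ⟨hA, hB⟩ => forall_glEntry_of_condA_of_condB φ ω hφdiag hφoff hA hB⟩

end Stmt15
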